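/- Let g : [u̅, u̅₁] → ℝ satisfy |g(u̅₁)| ≤ A r(u̅₁)^{-4} and the backward differential inequality |g'(x)| ≤ k r(x)^{-2} |g(x)| + c₁ r(x)^{-2} |g(x)|^{3/2} + c₂ r(x)^{-2} |g(x)|², where C⁻¹(1+x) ≤ r(x) ≤ C(1+x) and r(x) ≥ 1. Then, provided r(u̅₁) is sufficiently large (depending on A, k, c₁, c₂, C), one has |r(x)² g(x)| ≤ C' A r(u̅₁)^{-2} for all x ∈ [u̅, u̅₁], with C' depending only on k, c₁, c₂, C. -/

import Mathlib

/-!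
As long as `|g| ≤ 1`, the `3/2`-power and quadratic terms are dominated by the linear one, so
`|g'| ≤ K r⁻² |g|` with `K = k + c₁ + c₂`. Since `r⁻² ≤ C² (1 + x)⁻²` has an antiderivative
bounded by `C³`, Grönwall's inequality run backwards from `u̅₁` gives
`|g| ≤ e^{K C³} |g(u̅₁)| ≤ e^{K C³} A r(u̅₁)⁻⁴`, which is `≤ 1/2` once `r(u̅₁)` is large.
A continuity argument removes the assumption `|g| ≤ 1`, and `r(x) ≤ C² r(u̅₁)` converts the
bound into the claimed one.
-/

open Set Real

theorem abs_le_mul_exp_of_abs_deriv_le {g g' φ φ' : ℝ → ℝ} {a b : ℝ}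
    (hg : ∀ x ∈ Icc a b, HasDerivAt g (g' x) x) (hφ : ∀ x ∈ Icc a b, HasDerivAt φ (φ' x) x)
    (hbound : ∀ x ∈ Icc a b, |g' x| ≤ φ' x * |g x|) :
    ∀ x ∈ Icc a b, |g x| ≤ |g b| * exp (φ b - φ x) := by
  set F : ℝ → ℝ := fun y => g y ^ 2 * exp (2 * φ y)
  have hF : ∀ y ∈ Icc a b,
      HasDerivAt F (2 * exp (2 * φ y) * (g y * g' y + φ' y * g y ^ 2)) y := fun y hy =>
    (((hg y hy).fun_pow 2).fun_mul ((hφ y hy).const_mul 2).exp).congr_deriv (by norm_num; ring)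
  -- `g g' ≥ -|g| |g'| ≥ -φ' g²`, so the weighted energy `F` increases
  have hF_mono : MonotoneOn F (Icc a b) := by
    refine monotoneOn_of_hasDerivWithinAt_nonneg (convex_Icc a b)
      (fun y hy => (hF y hy).continuousAt.continuousWithinAt)
      (fun y hy => (hF y (interior_subset hy)).hasDerivWithinAt) fun y hy => ?_
    have hy := interior_subset hy
    have hgg' : -(φ' y * g y ^ 2) ≤ g y * g' y := by
      have := mul_le_mul_of_nonneg_left (hbound y hy) (abs_nonneg (g y))
      have hsq : |g y| * (φ' y * |g y|) = φ' y * g y ^ 2 := by rw [← sq_abs (g y)]; ring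
      rw [← abs_mul, hsq] at this
      linarith [neg_abs_le (g y * g' y)]
    exact mul_nonneg (by positivity) (by linarith)
  intro x hx
  have hFx : F x ≤ F b := hF_mono hx ⟨hx.1.trans hx.2, le_rfl⟩ hx.2
  rw [← sq_le_sq₀ (abs_nonneg _) (by positivity), sq_abs, mul_pow, sq_abs,
    sq (exp _), ← exp_add]
  calc g x ^ 2 = F x * exp (-(2 * φ x)) := by simp only [F, mul_assoc, ← exp_add]; simp
    _ ≤ F b * exp (-(2 * φ x)) := by gcongr
    _ = g b ^ 2 * exp (φ b - φ x + (φ b - φ x)) := by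
        simp only [F, mul_assoc, ← exp_add]; ring_nf

theorem ContinuousOn.forall_le_of_bootstrap {f : ℝ → ℝ} {a b M : ℝ}
    (hf : ContinuousOn f (Icc a b)) (hb : f b < M) (hstep : ∀ t ∈ Icc a b, (∀ y ∈ Icc t b, f y ≤ M) → f t < M) :
    ∀ y ∈ Icc a b, f y ≤ M := by
  by_contra! hbad
  set S := Icc a b ∩ f ⁻¹' Ici M
  have hS : IsCompact S :=
    isCompact_Icc.of_isClosed_subset (hf.preimage_isClosed_of_isClosed isClosed_Icc isClosed_Ici)
      inter_subset_left
  obtain ⟨y₀, hy₀, hy₀M⟩ := hbad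
  have hm : sSup S ∈ S := hS.sSup_mem ⟨y₀, hy₀, le_of_lt hy₀M⟩
  set m := sSup S
  have hmb : m < b := hm.1.2.lt_of_ne fun h => hb.not_ge (h ▸ hm.2)
  have hright : Ioc m b ⊆ Icc m b ∩ f ⁻¹' Iic M := fun y hy =>
    ⟨Ioc_subset_Icc_self hy, show f y ≤ M from le_of_not_ge fun hMy =>
      hy.1.not_ge (le_csSup hS.bddAbove ⟨⟨hm.1.1.trans hy.1.le, hy.2⟩, hMy⟩)⟩
  have hclosed : IsClosed (Icc m b ∩ f ⁻¹' Iic M) :=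
    (hf.mono (Icc_subset_Icc_left hm.1.1)).preimage_isClosed_of_isClosed isClosed_Icc
      isClosed_Iic
  have hle : ∀ y ∈ Icc m b, f y ≤ M := fun y hy =>
    (closure_minimal hright hclosed (by rwa [closure_Ioc hmb.ne])).2
  exact (hstep m hm.1 hle).not_ge hm.2

theorem hasDerivAt_neg_inv_one_add {x : ℝ} (hx : 0 < 1 + x) :
    HasDerivAt (fun y => -(1 + y)⁻¹) ((1 + x) ^ 2)⁻¹ x :=
  (((hasDerivAt_id' x).const_add 1).inv hx.ne').neg.congr_deriv (by field_simp)

theorem mul_add_rpow_add_sq_le {k c₁ c₂ w s : ℝ} (hc₁ : 0 ≤ c₁) (hc₂ : 0 ≤ c₂) (hw : 0 ≤ w)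
    (hs₀ : 0 ≤ s) (hs₁ : s ≤ 1) :
    k * w * s + c₁ * w * s ^ ((3 : ℝ) / 2) + c₂ * w * s ^ 2 ≤ (k + c₁ + c₂) * w * s := by
  have h₁ : s ^ ((3 : ℝ) / 2) ≤ s := rpow_le_self_of_le_one hs₀ hs₁ (by norm_num)
  have h₂ : s ^ 2 ≤ s := pow_le_of_le_one hs₀ hs₁ two_ne_zero
  nlinarith [mul_le_mul_of_nonneg_left h₁ (mul_nonneg hc₁ hw),
    mul_le_mul_of_nonneg_left h₂ (mul_nonneg hc₂ hw)]

theorem abs_le_abs_mul_exp_of_abs_le_one {k c₁ c₂ C a b : ℝ} {g g' r : ℝ → ℝ}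
    (hk : 0 ≤ k) (hc₁ : 0 ≤ c₁) (hc₂ : 0 ≤ c₂) (hC : 0 < C)
    (hr1 : ∀ x ∈ Icc a b, 1 ≤ r x)
    (hrC : ∀ x ∈ Icc a b, C⁻¹ * (1 + x) ≤ r x ∧ r x ≤ C * (1 + x))
    (hg : ∀ x ∈ Icc a b, HasDerivAt g (g' x) x)
    (hg' : ∀ x ∈ Icc a b,
      |g' x| ≤ k * (r x ^ 2)⁻¹ * |g x| + c₁ * (r x ^ 2)⁻¹ * |g x| ^ ((3:ℝ) / 2)
        + c₂ * (r x ^ 2)⁻¹ * |g x| ^ 2)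
    (hsmall : ∀ x ∈ Icc a b, |g x| ≤ 1) :
    ∀ x ∈ Icc a b, |g x| ≤ |g b| * exp ((k + c₁ + c₂) * C ^ 3) := by
  set K := k + c₁ + c₂
  have hK : 0 ≤ K := by positivity
  have hCinv : ∀ x ∈ Icc a b, C⁻¹ ≤ 1 + x := fun x hx => by
    rw [inv_le_iff_one_le_mul₀' hC]
    exact (hr1 x hx).trans (hrC x hx).2
  have hpos : ∀ x ∈ Icc a b, 0 < 1 + x := fun x hx => (inv_pos.2 hC).trans_le (hCinv x hx)
  have hweight : ∀ x ∈ Icc a b, (r x ^ 2)⁻¹ ≤ C ^ 2 * ((1 + x) ^ 2)⁻¹ := fun x hx => by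
    have hlow : 0 < C⁻¹ * (1 + x) := mul_pos (inv_pos.2 hC) (hpos x hx)
    calc (r x ^ 2)⁻¹ ≤ ((C⁻¹ * (1 + x)) ^ 2)⁻¹ := by gcongr; exact (hrC x hx).1
      _ = C ^ 2 * ((1 + x) ^ 2)⁻¹ := by rw [mul_pow, mul_inv, inv_pow, inv_inv]
  have hgron := abs_le_mul_exp_of_abs_deriv_le (φ := fun y => K * C ^ 2 * -(1 + y)⁻¹)
    (φ' := fun y => K * C ^ 2 * ((1 + y) ^ 2)⁻¹) hg
    (fun x hx => (hasDerivAt_neg_inv_one_add (hpos x hx)).const_mul _) fun x hx =>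
      calc |g' x| ≤ K * (r x ^ 2)⁻¹ * |g x| :=
            (hg' x hx).trans (mul_add_rpow_add_sq_le hc₁ hc₂ (by positivity)
              (abs_nonneg _) (hsmall x hx))
        _ ≤ K * C ^ 2 * ((1 + x) ^ 2)⁻¹ * |g x| := by
            rw [mul_assoc K (C ^ 2)]; gcongr; exact hweight x hx
  intro x hx
  refine (hgron x hx).trans (mul_le_mul_of_nonneg_left (exp_le_exp.2 ?_) (abs_nonneg _))
  have hb : 0 ≤ (1 + b)⁻¹ := (inv_pos.2 (hpos b ⟨hx.1.trans hx.2, le_rfl⟩)).le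
  have hx' : (1 + x)⁻¹ ≤ C := inv_le_of_inv_le₀ hC (hCinv x hx)
  calc K * C ^ 2 * -(1 + b)⁻¹ - K * C ^ 2 * -(1 + x)⁻¹
      = K * C ^ 2 * ((1 + x)⁻¹ - (1 + b)⁻¹) := by ring
    _ ≤ K * C ^ 2 * C := by gcongr; linarith
    _ = K * C ^ 3 := by ring

theorem le_sq_mul_of_le_mul_one_add {C x y rx ry : ℝ} (hC : 0 < C) (hxy : x ≤ y)
    (hx : rx ≤ C * (1 + x)) (hy : C⁻¹ * (1 + y) ≤ ry) : rx ≤ C ^ 2 * ry := by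
  rw [inv_mul_le_iff₀ hC] at hy
  calc rx ≤ C * (1 + x) := hx
    _ ≤ C * (C * ry) := by gcongr; linarith
    _ = C ^ 2 * ry := by ring

/-- Bootstrap estimate for `g = g(L'₁, L₂)`: the backward transport
inequality with linear, `3/2`-power and quadratic terms carrying `r⁻²`
weights propagates the smallness `|g(u̅₁)| ≤ A r(u̅₁)⁻⁴` backwards, giving
`|r² g| ≤ C' A r(u̅₁)⁻²` provided `r(u̅₁)` is large enough; `C'` depends
only on `k, c₁, c₂, C`. -/
theorem stmt18 (k c₁ c₂ C : ℝ) (hk : 0 ≤ k) (hc₁ : 0 ≤ c₁) (hc₂ : 0 ≤ c₂)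
    (hC : 0 < C) :
    ∃ C' : ℝ, 0 < C' ∧ ∀ A : ℝ, 0 ≤ A →
      ∃ R₀ : ℝ, 0 < R₀ ∧
        ∀ (ub ub₁ : ℝ) (g g' r : ℝ → ℝ), ub ≤ ub₁ →
          (∀ x ∈ Set.Icc ub ub₁, 1 ≤ r x) →
          (∀ x ∈ Set.Icc ub ub₁, C⁻¹ * (1 + x) ≤ r x ∧ r x ≤ C * (1 + x)) →
          |g ub₁| ≤ A * (r ub₁ ^ 4)⁻¹ →
          (∀ x ∈ Set.Icc ub ub₁, HasDerivAt g (g' x) x) →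
          (∀ x ∈ Set.Icc ub ub₁,
            |g' x| ≤ k * (r x ^ 2)⁻¹ * |g x|
              + c₁ * (r x ^ 2)⁻¹ * |g x| ^ ((3:ℝ) / 2)
              + c₂ * (r x ^ 2)⁻¹ * |g x| ^ 2) →
          R₀ ≤ r ub₁ →
          ∀ x ∈ Set.Icc ub ub₁, |r x ^ 2 * g x| ≤ C' * A * (r ub₁ ^ 2)⁻¹ := by
  set E := exp ((k + c₁ + c₂) * C ^ 3)
  have hE : 1 ≤ E := one_le_exp (by positivity)
  refine ⟨C ^ 4 * E, by positivity, fun A hA => ⟨2 * A * E + 1, by positivity, ?_⟩⟩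
  intro ub ub₁ g g' r hle hr1 hrC hinit hg hg' hR x hx
  have hb : ub₁ ∈ Icc ub ub₁ := ⟨hle, le_rfl⟩
  have hrb : 1 ≤ r ub₁ := hr1 ub₁ hb
  have hapriori (t : ℝ) (ht : t ∈ Icc ub ub₁) (hsmall : ∀ y ∈ Icc t ub₁, |g y| ≤ 1) :
      ∀ y ∈ Icc t ub₁, |g y| ≤ |g ub₁| * E :=
    have hsub : Icc t ub₁ ⊆ Icc ub ub₁ := Icc_subset_Icc_left ht.1
    abs_le_abs_mul_exp_of_abs_le_one hk hc₁ hc₂ hC (fun y hy => hr1 y (hsub hy))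
      (fun y hy => hrC y (hsub hy)) (fun y hy => hg y (hsub hy)) (fun y hy => hg' y (hsub hy))
      hsmall
  have hgb : |g ub₁| * E ≤ 1 / 2 := by
    have hr4 : 2 * A * E + 1 ≤ r ub₁ ^ 4 := hR.trans (le_self_pow₀ hrb (by norm_num))
    have hgb_mul : |g ub₁| * (2 * A * E + 1) ≤ A := by
      calc |g ub₁| * (2 * A * E + 1) ≤ A * (r ub₁ ^ 4)⁻¹ * r ub₁ ^ 4 := by gcongr
        _ = A := by field_simp
    nlinarith [mul_le_mul_of_nonneg_right hgb_mul (zero_le_one.trans hE),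
      mul_nonneg hA (zero_le_one.trans hE)]
  have hsmall : ∀ y ∈ Icc ub ub₁, |g y| ≤ 1 :=
    ContinuousOn.forall_le_of_bootstrap
      (fun y hy => (hg y hy).continuousAt.continuousWithinAt.abs)
      ((le_mul_of_one_le_right (abs_nonneg _) hE).trans_lt (by linarith))
      fun t ht hsmall => (hapriori t ht hsmall t ⟨le_rfl, ht.2⟩).trans_lt (by linarith)
  calc |r x ^ 2 * g x| = r x ^ 2 * |g x| := by rw [abs_mul, abs_sq]
    _ ≤ (C ^ 2 * r ub₁) ^ 2 * (A * (r ub₁ ^ 4)⁻¹ * E) := by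
        gcongr
        · exact (hr1 x hx).trans' zero_le_one
        · exact le_sq_mul_of_le_mul_one_add hC hx.2 (hrC x hx).2 (hrC ub₁ hb).1
        · exact (hapriori ub ⟨le_rfl, hle⟩ hsmall x hx).trans (by gcongr)
    _ = C ^ 4 * E * A * (r ub₁ ^ 2)⁻¹ := by field_simp
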